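/- Lower bound on the exponential collision divergence via the information-spectrum divergence: Let ρ be a density operator and σ a positive semidefinite matrix of the same size, let η ∈ (0,1) and λ₁, λ₂ > 0, and suppose λ₁ρ + λ₂σ is positive definite. Then Tr[ ( (λ₁ρ+λ₂σ)^{−1/4} ρ (λ₁ρ+λ₂σ)^{−1/4} )² ] ≥ (1−η) / ( λ₁ + λ₂·e^{−D_s^η(ρ‖σ)} ). -/

import Mathlib

open scoped Kronecker ComplexOrder
open MeasureTheory Matrix

noncomputable section

namespace QD

/-! ### Haar measure on the unitary group -/

variable {n : Type*} [Fintype n] [DecidableEq n]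

theorem isClosed_unitaryGroup :
    IsClosed ((Matrix.unitaryGroup n ℂ : Set (Matrix n n ℂ))) := by
  have h1 : Continuous fun A : Matrix n n ℂ => star A * A :=
    Continuous.matrix_mul continuous_star continuous_id
  have h2 : Continuous fun A : Matrix n n ℂ => A * star A :=
    Continuous.matrix_mul continuous_id continuous_star
  have heq : (Matrix.unitaryGroup n ℂ : Set (Matrix n n ℂ)) =
      {A | star A * A = 1} ∩ {A | A * star A = 1} := by
    ext A; exact Iff.rfl
  rw [heq]
  exact (isClosed_eq h1 continuous_const).inter (isClosed_eq h2 continuous_const)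

theorem isCompact_unitaryGroup :
    IsCompact ((Matrix.unitaryGroup n ℂ : Set (Matrix n n ℂ))) := by
  have hK : IsCompact {A : Matrix n n ℂ | ∀ i j, A i j ∈ Metric.closedBall (0 : ℂ) 1} := by
    have heq : {A : Matrix n n ℂ | ∀ i j, A i j ∈ Metric.closedBall (0 : ℂ) 1} =
        Set.pi Set.univ fun _ : n => Set.pi Set.univ fun _ : n => Metric.closedBall (0 : ℂ) 1 := by
      refine Set.eq_of_subset_of_subset ?_ ?_
      · intro A hA
        exact fun i _ j _ => hA i j
      · intro A hA i j
        exact hA i trivial j trivial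
    rw [heq]
    exact isCompact_univ_pi fun _ => isCompact_univ_pi fun _ => isCompact_closedBall _ _
  refine IsCompact.of_isClosed_subset hK isClosed_unitaryGroup ?_
  intro A hA i j
  simpa [Metric.mem_closedBall, dist_eq_norm] using entry_norm_bound_of_unitary hA i j

instance : CompactSpace (Matrix.unitaryGroup n ℂ) :=
  isCompact_iff_compactSpace.mp isCompact_unitaryGroup

instance : IsTopologicalGroup (Matrix.unitaryGroup n ℂ) where
  continuous_mul := by
    apply Continuous.subtype_mk
    exact ((continuous_subtype_val.comp continuous_fst).matrix_mul
      (continuous_subtype_val.comp continuous_snd))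
  continuous_inv :=
    Continuous.subtype_mk (continuous_star.comp continuous_subtype_val) _

instance : MeasurableSpace (Matrix.unitaryGroup n ℂ) := borel _

instance : BorelSpace (Matrix.unitaryGroup n ℂ) := ⟨rfl⟩

/-- The normalized Haar (probability) measure on the unitary group of `ℂ^n`. -/
def haarU (n : Type*) [Fintype n] [DecidableEq n] : Measure (Matrix.unitaryGroup n ℂ) :=
  Measure.haarMeasure (⊤ : TopologicalSpace.PositiveCompacts (Matrix.unitaryGroup n ℂ))

/-- Entrywise (Bochner) integral of a matrix-valued function. -/
def matIntegral {G : Type*} [MeasurableSpace G] (μ : Measure G) {m l : Type*}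
    (f : G → Matrix m l ℂ) : Matrix m l ℂ :=
  Matrix.of fun i j => ∫ g, f g i j ∂μ

/-! ### Basic matrix-analytic quantities -/

/-- Trace norm `‖X‖₁ = Tr √(XᴴX)`. -/
def traceNorm (X : Matrix n n ℂ) : ℝ :=
  let h := (Matrix.posSemidef_conjTranspose_mul_self X).1
  ((h.eigenvectorUnitary : Matrix n n ℂ) *
    Matrix.diagonal (fun i => ((Real.sqrt (h.eigenvalues i) : ℝ) : ℂ)) *
    (star h.eigenvectorUnitary : Matrix n n ℂ)).trace.re

/-- Hilbert–Schmidt (Schatten-2) norm `‖X‖₂ = √(Tr[XᴴX])`. -/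
def hsNorm (X : Matrix n n ℂ) : ℝ :=
  Real.sqrt ((Xᴴ * X).trace.re)

/-- A density operator: positive semidefinite with unit trace. -/
def IsDensity (ρ : Matrix n n ℂ) : Prop := ρ.PosSemidef ∧ ρ.trace = 1

/-- Eigenvalues of a matrix (junk value `0` off the Hermitian matrices). -/
def eigvals (H : Matrix n n ℂ) : n → ℝ :=
  if h : H.IsHermitian then h.eigenvalues else 0

/-- Number of distinct eigenvalues `|spec(H)|`. -/
def specCount (H : Matrix n n ℂ) : ℕ := (Finset.univ.image (eigvals H)).card

/-- Spectral projection of a Hermitian matrix onto the eigenspace of `μ`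
(junk value `0` off the Hermitian matrices). -/
def eigProj (H : Matrix n n ℂ) (μ : ℝ) : Matrix n n ℂ :=
  if h : H.IsHermitian then
    (h.eigenvectorUnitary : Matrix n n ℂ) *
      Matrix.diagonal (fun i => if h.eigenvalues i = μ then (1 : ℂ) else 0) *
      (h.eigenvectorUnitary : Matrix n n ℂ)ᴴ
  else 0

/-- The pinching map `P_H[L] = ∑_i e_i L e_i`, the sum running over the spectral
projections `e_i` onto the distinct eigenvalues of `H`. -/
def pinch (H L : Matrix n n ℂ) : Matrix n n ℂ :=
  ∑ μ ∈ Finset.univ.image (eigvals H), eigProj H μ * L * eigProj H μ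

/-- The projection `{X ≤ Y}` onto the span of eigenvectors of `Y - X` with nonnegative
eigenvalues. -/
def projLE (X Y : Matrix n n ℂ) : Matrix n n ℂ :=
  if h : (Y - X).IsHermitian then
    (h.eigenvectorUnitary : Matrix n n ℂ) *
      Matrix.diagonal (fun i => if 0 ≤ h.eigenvalues i then (1 : ℂ) else 0) *
      (h.eigenvectorUnitary : Matrix n n ℂ)ᴴ
  else 0

/-- The projection onto the span of eigenvectors of `H` with positive eigenvalues. -/
def projPos (H : Matrix n n ℂ) : Matrix n n ℂ :=
  if h : H.IsHermitian then
    (h.eigenvectorUnitary : Matrix n n ℂ) *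
      Matrix.diagonal (fun i => if 0 < h.eigenvalues i then (1 : ℂ) else 0) *
      (h.eigenvectorUnitary : Matrix n n ℂ)ᴴ
  else 0

/-- Real power of a Hermitian matrix through the spectral decomposition
(junk value `0` off the Hermitian matrices). -/
def rpow (H : Matrix n n ℂ) (r : ℝ) : Matrix n n ℂ :=
  if h : H.IsHermitian then
    (h.eigenvectorUnitary : Matrix n n ℂ) *
      Matrix.diagonal (fun i => ((h.eigenvalues i ^ r : ℝ) : ℂ)) *
      (h.eigenvectorUnitary : Matrix n n ℂ)ᴴ
  else 0

/-- Matrix logarithm of a Hermitian (positive definite) matrix through the spectral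
decomposition (junk value `0` off the Hermitian matrices). -/
def matLog (H : Matrix n n ℂ) : Matrix n n ℂ :=
  if h : H.IsHermitian then
    (h.eigenvectorUnitary : Matrix n n ℂ) *
      Matrix.diagonal (fun i => ((Real.log (h.eigenvalues i) : ℝ) : ℂ)) *
      (h.eigenvectorUnitary : Matrix n n ℂ)ᴴ
  else 0

/-! ### Divergences -/

/-- `ε`-information-spectrum divergence
`D_s^ε(ρ‖σ) = sup {log c : c > 0, Tr[ρ {ρ ≤ cσ}] ≤ ε}`. -/
def Ds (ε : ℝ) (ρ σ : Matrix n n ℂ) : ℝ :=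
  sSup {x : ℝ | ∃ c : ℝ, 0 < c ∧ (ρ * projLE ρ ((c : ℂ) • σ)).trace.re ≤ ε ∧ x = Real.log c}

/-- `ε`-hypothesis-testing divergence
`D_h^ε(ρ‖σ) = sup {-log Tr[σT] : 0 ≤ T ≤ 1, Tr[ρT] ≥ 1 - ε}`. -/
def Dh (ε : ℝ) (ρ σ : Matrix n n ℂ) : ℝ :=
  sSup {x : ℝ | ∃ T : Matrix n n ℂ, T.PosSemidef ∧ (1 - T).PosSemidef ∧
    1 - ε ≤ (ρ * T).trace.re ∧ x = -Real.log ((σ * T).trace.re)}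

/-- `exp D₂*(ρ‖σ) = Tr[(σ^{-1/4} ρ σ^{-1/4})²]`, the exponential of the collision
divergence. -/
def expD2 (ρ σ : Matrix n n ℂ) : ℝ :=
  ((rpow σ (-(1/4 : ℝ)) * ρ * rpow σ (-(1/4 : ℝ))) ^ 2).trace.re

/-- Quantum relative entropy `D(ρ‖σ) = Tr[ρ(log ρ - log σ)]`. -/
def relEntropy (ρ σ : Matrix n n ℂ) : ℝ :=
  (ρ * (matLog ρ - matLog σ)).trace.re

/-- Quantum relative entropy variance `V(ρ‖σ) = Tr[ρ(log ρ - log σ)²] - D(ρ‖σ)²`. -/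
def relVar (ρ σ : Matrix n n ℂ) : ℝ :=
  ((ρ * (matLog ρ - matLog σ) ^ 2).trace.re) - (relEntropy ρ σ) ^ 2

/-! ### Bipartite notions; the first factor is the `A` system -/

variable {a b e : Type*}

/-- Partial trace over the first tensor factor. -/
def ptraceFst [Fintype a] (X : Matrix (a × b) (a × b) ℂ) : Matrix b b ℂ :=
  Matrix.of fun i j => ∑ x, X (x, i) (x, j)

/-- Partial trace over the `A₁` factor of a tripartite `(A₁ ⊗ C) ⊗ E` system. -/
def ptraceA1 [Fintype a] (X : Matrix ((a × b) × e) ((a × b) × e) ℂ) :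
    Matrix (b × e) (b × e) ℂ :=
  Matrix.of fun p q => ∑ x, X ((x, p.1), p.2) ((x, q.1), q.2)

/-- Pinching of a bipartite operator with respect to a state on the second factor:
`P_{σ} = id ⊗ (pinching w.r.t. σ)`. -/
def pinchSnd [Fintype a] [DecidableEq a] [Fintype b] [DecidableEq b]
    (σ : Matrix b b ℂ) (L : Matrix (a × b) (a × b) ℂ) : Matrix (a × b) (a × b) ℂ :=
  ∑ μ ∈ Finset.univ.image (eigvals σ),
    ((1 : Matrix a a ℂ) ⊗ₖ eigProj σ μ) * L * ((1 : Matrix a a ℂ) ⊗ₖ eigProj σ μ)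

/-- Conditional `ε`-hypothesis-testing entropy `H_h^ε(A|B)_ρ = -D_h^ε(ρ_{AB} ‖ 1_A ⊗ ρ_B)`. -/
def Hh [Fintype a] [DecidableEq a] [Fintype b] [DecidableEq b] (ε : ℝ)
    (ρ : Matrix (a × b) (a × b) ℂ) : ℝ :=
  -(Dh ε ρ ((1 : Matrix a a ℂ) ⊗ₖ ptraceFst ρ))

/-- Conditional entropy `H(A|B)_ρ = -Tr[ρ (log ρ - log (1_A ⊗ ρ_B))]`. -/
def condEntropy [Fintype a] [DecidableEq a] [Fintype b] [DecidableEq b]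
    (ρ : Matrix (a × b) (a × b) ℂ) : ℝ :=
  -relEntropy ρ ((1 : Matrix a a ℂ) ⊗ₖ ptraceFst ρ)

/-- Conditional information variance `V(A|B)_ρ`. -/
def condVar [Fintype a] [DecidableEq a] [Fintype b] [DecidableEq b]
    (ρ : Matrix (a × b) (a × b) ℂ) : ℝ :=
  relVar ρ ((1 : Matrix a a ℂ) ⊗ₖ ptraceFst ρ)

/-- The average decoupling error
`Δ = (1/2) ∫ ‖Tr_{A₁}[(U ⊗ 1_E) ρ (U ⊗ 1_E)†] - (1_C/|C|) ⊗ ρ_E‖₁ dU`,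
with respect to the normalized Haar measure, for a state on `(A₁ ⊗ C) ⊗ E`. -/
def decErr {a c e : Type*} [Fintype a] [DecidableEq a] [Fintype c] [DecidableEq c]
    [Fintype e] [DecidableEq e] (ρ : Matrix ((a × c) × e) ((a × c) × e) ℂ) : ℝ :=
  (1 / 2) * ∫ U : Matrix.unitaryGroup (a × c) ℂ,
    traceNorm
      (ptraceA1 (((U : Matrix (a × c) (a × c) ℂ) ⊗ₖ (1 : Matrix e e ℂ)) * ρ *
          ((U : Matrix (a × c) (a × c) ℂ) ⊗ₖ (1 : Matrix e e ℂ))ᴴ) -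
        (((Fintype.card c : ℂ)⁻¹ • (1 : Matrix c c ℂ)) ⊗ₖ ptraceFst ρ))
    ∂(haarU (a × c))

/-! ### Asymptotics -/

/-- `n`-fold Kronecker tensor power of a matrix. -/
def kronPow {α : Type*} [Fintype α] (ρ : Matrix α α ℂ) (N : ℕ) :
    Matrix (Fin N → α) (Fin N → α) ℂ :=
  Matrix.of fun p q => ∏ i, ρ (p i) (q i)

/-- `n`-fold Kronecker tensor power of a bipartite matrix, regarded as a bipartite
matrix on `A^n ⊗ E^n`. -/
def tensorPow {α β : Type*} [Fintype α] [Fintype β] (ρ : Matrix (α × β) (α × β) ℂ) (N : ℕ) :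
    Matrix ((Fin N → α) × (Fin N → β)) ((Fin N → α) × (Fin N → β)) ℂ :=
  Matrix.of fun p q => ∏ i, ρ (p.1 i, p.2 i) (q.1 i, q.2 i)

/-- The maximal remainder dimension `ℓ^ε(A|E)_ρ`: the largest `dC` dividing `|A|` such
that, for an identification `A ≅ A₁ ⊗ C` with `|C| = dC`, the average decoupling error
is at most `ε`. -/
def maxRemDim {α β : Type*} [Fintype α] [DecidableEq α] [Fintype β] [DecidableEq β]
    (ε : ℝ) (ρ : Matrix (α × β) (α × β) ℂ) : ℕ :=
  sSup {dC : ℕ | dC ∣ Fintype.card α ∧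
    ∃ φ : α ≃ Fin (Fintype.card α / dC) × Fin dC,
      decErr (Matrix.of fun p q => ρ (φ.symm p.1, p.2) (φ.symm q.1, q.2)) ≤ ε}

/-- The inverse of the cumulative distribution function of the standard normal
distribution. -/
def PhiInv (ε : ℝ) : ℝ :=
  sSup {u : ℝ | (∫ t in Set.Iic u, Real.exp (-(t ^ 2) / 2) / Real.sqrt (2 * Real.pi)) ≤ ε}


/-- `1_{A₁} ⊗ Y` : reinsertion of the identity on the `A₁` factor of `(A₁ ⊗ A₂) ⊗ E`. -/
def insertIdFst {a1 a2 e : Type*} [DecidableEq a1] (Y : Matrix (a2 × e) (a2 × e) ℂ) :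
    Matrix ((a1 × a2) × e) ((a1 × a2) × e) ℂ :=
  Matrix.of fun p q => (if p.1.1 = q.1.1 then (1 : ℂ) else 0) * Y (p.1.2, p.2) (q.1.2, q.2)

/-- The swap operator `F = ∑_{i,j} |i⟩⟨j| ⊗ |j⟩⟨i|` on `ℂ^α ⊗ ℂ^α`. -/
def swapOp (α : Type*) [Fintype α] [DecidableEq α] : Matrix (α × α) (α × α) ℂ :=
  ∑ i : α, ∑ j : α, (Matrix.single i j (1 : ℂ)) ⊗ₖ (Matrix.single j i (1 : ℂ))

/-- The operator on `(ℂ^{A₁} ⊗ ℂ^{A₂}) ⊗ (ℂ^{A₁} ⊗ ℂ^{A₂})` acting as the identity on the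
two `A₁` factors and as the swap on the two `A₂` factors. -/
def partialSwapOp (a1 a2 : Type*) [DecidableEq a1] [DecidableEq a2] :
    Matrix ((a1 × a2) × (a1 × a2)) ((a1 × a2) × (a1 × a2)) ℂ :=
  Matrix.of fun p q =>
    if p.1.1 = q.1.1 ∧ p.2.1 = q.2.1 ∧ p.1.2 = q.2.2 ∧ p.2.2 = q.1.2 then (1 : ℂ) else 0

end QD

/-!
Let `τ = λ₁ρ + λ₂σ`. For `c > 0` with `Tr[ρ {ρ ≤ cσ}] ≤ η`, let `P = 1 - {ρ ≤ cσ}`: then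
`Tr[ρP] ≥ 1 - η`, and since `ρ - cσ ≥ 0` on the range of `P`, `Tr[τP] ≤ (λ₁ + λ₂/c) Tr[ρP]`.
Cauchy–Schwarz for the Hilbert–Schmidt inner product, applied to
`Tr[ρP] = Tr[(τ^{-1/4} ρ τ^{-1/4}) (τ^{1/4} P τ^{1/4})]`, together with
`Tr[(τ^{1/4} P τ^{1/4})²] ≤ Tr[τP]` (as `0 ≤ P ≤ 1`), gives
`Tr[ρP]² ≤ exp D₂*(ρ‖τ) · Tr[τP]`, hence `1 - η ≤ exp D₂*(ρ‖τ) (λ₁ + λ₂/c)`.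
Taking the supremum over `log c` yields the claim.
-/

namespace QD

open scoped MatrixOrder

lemma le_mul_exp_neg_csSup {s : Set ℝ} (hs : s.Nonempty) {a b : ℝ} (hb : 0 ≤ b)
    (h : ∀ x ∈ s, a ≤ b * Real.exp (-x)) : a ≤ b * Real.exp (-sSup s) := by
  rcases le_or_gt a 0 with ha | ha
  · exact ha.trans (by positivity)
  obtain ⟨x₀, hx₀⟩ := hs
  have hb' : 0 < b := pos_of_mul_pos_left (ha.trans_le (h x₀ hx₀)) (Real.exp_pos _).le
  have hsup : sSup s ≤ Real.log (b / a) := csSup_le ⟨x₀, hx₀⟩ fun x hx => by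
    rw [Real.le_log_iff_exp_le (div_pos hb' ha), le_div_iff₀ ha]
    have := h x hx
    rw [Real.exp_neg, ← div_eq_mul_inv, le_div_iff₀ (Real.exp_pos x)] at this
    linarith
  calc a = b * Real.exp (-Real.log (b / a)) := by
        rw [Real.exp_neg, Real.exp_log (div_pos hb' ha)]; field_simp
    _ ≤ b * Real.exp (-sSup s) := by gcongr

lemma isHermitian_real_smul_sub {n : Type*} {X Y : Matrix n n ℂ} (hX : X.IsHermitian)
    (hY : Y.IsHermitian) (c : ℝ) : ((c : ℂ) • Y - X).IsHermitian :=
  (hY.smul (Complex.conj_ofReal c)).sub hX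

lemma re_trace_nonneg {n : Type*} [Fintype n] {A : Matrix n n ℂ} (hA : 0 ≤ A) :
    0 ≤ A.trace.re :=
  (RCLike.nonneg_iff.mp (nonneg_iff_posSemidef.mp hA).trace_nonneg).1

variable {n : Type*} [Fintype n] [DecidableEq n]

lemma re_trace_mul_nonneg {A B : Matrix n n ℂ} (hA : 0 ≤ A) (hB : 0 ≤ B) :
    0 ≤ (A * B).trace.re := by
  obtain ⟨X, rfl⟩ := CStarAlgebra.nonneg_iff_eq_star_mul_self.mp hA
  rw [mul_assoc, trace_mul_comm]
  exact re_trace_nonneg (star_right_conjugate_nonneg hB X)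

lemma re_trace_mul_self_le_of_le {X B : Matrix n n ℂ} (hX : 0 ≤ X) (hXB : X ≤ B) :
    (X * X).trace.re ≤ (X * B).trace.re := by
  have := re_trace_mul_nonneg hX (sub_nonneg.mpr hXB)
  rw [mul_sub, trace_sub, Complex.sub_re] at this
  linarith

lemma sq_re_trace_mul_le {A B : Matrix n n ℂ} (hA : A.IsHermitian) (hB : B.IsHermitian) :
    (A * B).trace.re ^ 2 ≤ (A * A).trace.re * (B * B).trace.re := by
  let _ := toMatrixSeminormedAddCommGroup (1 : Matrix n n ℂ) PosSemidef.one
  let _ := toMatrixInnerProductSpace (1 : Matrix n n ℂ) PosSemidef.one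
  have hinner : ∀ X Y : Matrix n n ℂ, X.IsHermitian → inner ℂ X Y = (X * Y).trace :=
    fun X Y hX => by
      change (Y * 1 * Xᴴ).trace = _
      rw [mul_one, hX.eq, trace_mul_comm]
  have hcs := inner_mul_inner_self_le (𝕜 := ℂ) A B
  rw [hinner A B hA, hinner B A hB, hinner A A hA, hinner B B hB, trace_mul_comm B A] at hcs
  calc (A * B).trace.re ^ 2 ≤ ‖(A * B).trace‖ * ‖(A * B).trace‖ := by
        rw [← sq]
        exact sq_le_sq' (neg_le_of_abs_le (Complex.abs_re_le_norm _)) (Complex.re_le_norm _)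
    _ ≤ _ := hcs

/-- The spectrum of a matrix is finite, so every function is continuous on it; registering this
with `fun_prop` discharges the continuity side conditions of the `cfc` lemmas. -/
@[fun_prop]
lemma continuousOn_spectrum_real (A : Matrix n n ℂ) (f : ℝ → ℝ) :
    ContinuousOn f (spectrum ℝ A) :=
  A.finite_real_spectrum.continuousOn f

lemma rpow_eq_cfc {H : Matrix n n ℂ} (hH : H.IsHermitian) (r : ℝ) :
    rpow H r = cfc (· ^ r : ℝ → ℝ) H := by
  rw [rpow, dif_pos hH, hH.cfc_eq, IsHermitian.cfc, Unitary.conjStarAlgAut_apply]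
  rfl

lemma isHermitian_rpow (H : Matrix n n ℂ) (r : ℝ) : (rpow H r).IsHermitian := by
  by_cases hH : H.IsHermitian
  · rw [rpow_eq_cfc hH]
    exact IsSelfAdjoint.isHermitian (cfc_predicate _ H)
  · rw [rpow, dif_neg hH]
    exact isHermitian_zero

lemma rpow_zero {H : Matrix n n ℂ} (hH : H.IsHermitian) : rpow H 0 = 1 := by
  simp only [rpow_eq_cfc hH, Real.rpow_zero]
  exact cfc_const_one ℝ H

lemma rpow_one {H : Matrix n n ℂ} (hH : H.IsHermitian) : rpow H 1 = H := by
  simp only [rpow_eq_cfc hH, Real.rpow_one]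
  exact cfc_id' ℝ H

lemma rpow_mul_rpow {H : Matrix n n ℂ} (hH : H.PosDef) (r s : ℝ) :
    rpow H r * rpow H s = rpow H (r + s) := by
  rw [rpow_eq_cfc hH.isHermitian, rpow_eq_cfc hH.isHermitian, rpow_eq_cfc hH.isHermitian,
    ← cfc_mul]
  exact cfc_congr fun x hx => (Real.rpow_add (hH.isStrictlyPositive.spectrum_pos hx) r s).symm

lemma projLE_eq_cfc {X Y : Matrix n n ℂ} (h : (Y - X).IsHermitian) :
    projLE X Y = cfc (fun x : ℝ => if 0 ≤ x then (1 : ℝ) else 0) (Y - X) := by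
  rw [projLE, dif_pos h, h.cfc_eq, IsHermitian.cfc, Unitary.conjStarAlgAut_apply]
  congr 3
  ext i
  split_ifs <;> simp [*]

lemma projLE_nonneg {X Y : Matrix n n ℂ} (h : (Y - X).IsHermitian) : 0 ≤ projLE X Y := by
  rw [projLE_eq_cfc h]
  exact cfc_nonneg fun x _ => by positivity

lemma projLE_le_one {X Y : Matrix n n ℂ} (h : (Y - X).IsHermitian) : projLE X Y ≤ 1 := by
  rw [projLE_eq_cfc h]
  exact cfc_le_one _ _ fun x _ => by split_ifs <;> norm_num

lemma re_trace_mul_projLE_le {X Y : Matrix n n ℂ} (h : (Y - X).IsHermitian) :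
    (X * projLE X Y).trace.re ≤ (Y * projLE X Y).trace.re := by
  have hpos : 0 ≤ (Y - X) * projLE X Y := by
    have : (Y - X) * projLE X Y = cfc (fun x : ℝ => x * if 0 ≤ x then 1 else 0) (Y - X) := by
      rw [cfc_mul (fun x : ℝ => x) _ (Y - X), cfc_id' ℝ (Y - X), projLE_eq_cfc h]
    rw [this]
    exact cfc_nonneg fun x _ => by split_ifs <;> simp_all
  have := re_trace_nonneg hpos
  rw [sub_mul, trace_sub, Complex.sub_re] at this
  linarith

lemma re_trace_mul_one_sub_projLE_le {X Y : Matrix n n ℂ} (h : (Y - X).IsHermitian) :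
    (Y * (1 - projLE X Y)).trace.re ≤ (X * (1 - projLE X Y)).trace.re := by
  have hpos : 0 ≤ (X - Y) * (1 - projLE X Y) := by
    have : (X - Y) * (1 - projLE X Y) =
        cfc (fun x : ℝ => -x * (1 - if 0 ≤ x then 1 else 0)) (Y - X) := by
      rw [cfc_mul (fun x : ℝ => -x) _ (Y - X), cfc_neg_id (Y - X), cfc_sub _ _ (Y - X),
        cfc_const_one ℝ (Y - X), projLE_eq_cfc h, neg_sub]
    rw [this]
    exact cfc_nonneg fun x _ => by split_ifs <;> simp_all; linarith
  have := re_trace_nonneg hpos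
  rw [sub_mul, trace_sub, Complex.sub_re] at this
  linarith

lemma exists_re_trace_mul_projLE_le {ρ σ : Matrix n n ℂ} (hρ : ρ.IsHermitian)
    (hσ : σ.PosSemidef) {η : ℝ} (hη : 0 < η) :
    ∃ c : ℝ, 0 < c ∧ (ρ * projLE ρ ((c : ℂ) • σ)).trace.re ≤ η := by
  have hs : 0 ≤ σ.trace.re := re_trace_nonneg (nonneg_iff_posSemidef.mpr hσ)
  set c := η / (σ.trace.re + 1)
  refine ⟨c, by positivity, ?_⟩
  have hH := isHermitian_real_smul_sub hρ hσ.isHermitian c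
  set Q := projLE ρ ((c : ℂ) • σ)
  have hσQ : (σ * Q).trace.re ≤ σ.trace.re := by
    have := re_trace_mul_nonneg (nonneg_iff_posSemidef.mpr hσ) (sub_nonneg.mpr (projLE_le_one hH))
    rw [mul_sub, mul_one, trace_sub, Complex.sub_re] at this
    linarith
  calc (ρ * Q).trace.re ≤ c * (σ * Q).trace.re := by
        have := re_trace_mul_projLE_le hH
        rwa [smul_mul_assoc, trace_smul, smul_eq_mul, Complex.re_ofReal_mul] at this
    _ ≤ c * (σ.trace.re + 1) := by gcongr; linarith
    _ = η := div_mul_cancel₀ η (by positivity)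

lemma isHermitian_rpow_mul_mul_rpow {ρ : Matrix n n ℂ} (hρ : ρ.IsHermitian) (τ : Matrix n n ℂ)
    (r : ℝ) : (rpow τ r * ρ * rpow τ r).IsHermitian := by
  simpa only [(isHermitian_rpow τ r).eq] using isHermitian_conjTranspose_mul_mul (rpow τ r) hρ

lemma expD2_nonneg {ρ : Matrix n n ℂ} (hρ : ρ.IsHermitian) (τ : Matrix n n ℂ) :
    0 ≤ expD2 ρ τ := by
  have := star_mul_self_nonneg (rpow τ (-(1 / 4 : ℝ)) * ρ * rpow τ (-(1 / 4 : ℝ)))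
  rw [star_eq_conjTranspose, (isHermitian_rpow_mul_mul_rpow hρ τ _).eq] at this
  simpa only [expD2, sq] using re_trace_nonneg this

lemma sq_re_trace_mul_le_expD2_mul {ρ τ P : Matrix n n ℂ} (hρ : ρ.IsHermitian) (hτ : τ.PosDef)
    (hP₀ : 0 ≤ P) (hP₁ : P ≤ 1) :
    (ρ * P).trace.re ^ 2 ≤ expD2 ρ τ * (τ * P).trace.re := by
  set R := rpow τ (-(1 / 4 : ℝ))
  set S := rpow τ (1 / 4 : ℝ)
  have hRS : R * S = 1 := by
    rw [rpow_mul_rpow hτ, neg_add_cancel, rpow_zero hτ.isHermitian]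
  have hSR : S * R = 1 := mul_eq_one_comm.mp hRS
  have hS4 : S * S * S * S = τ := by
    simp only [S, rpow_mul_rpow hτ]
    norm_num [rpow_one hτ.isHermitian]
  have hS : S.IsHermitian := isHermitian_rpow τ _
  have hT : (R * ρ * R).IsHermitian := isHermitian_rpow_mul_mul_rpow hρ τ _
  have hE : expD2 ρ τ = (R * ρ * R * (R * ρ * R)).trace.re := by rw [expD2, sq]
  clear_value R S
  set T := R * ρ * R
  set Z := S * P * S
  have hZ₀ : 0 ≤ Z := by
    have := star_left_conjugate_nonneg hP₀ S
    rwa [star_eq_conjTranspose, hS.eq] at this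
  have hZ₁ : Z ≤ S * S := by
    have := star_left_conjugate_le_conjugate hP₁ S
    rwa [star_eq_conjTranspose, hS.eq, mul_one] at this
  have hTZ : (T * Z).trace = (ρ * P).trace := by
    calc (T * Z).trace = (R * ρ * (R * S) * P * S).trace := by simp only [T, Z, mul_assoc]
      _ = (S * (R * ρ * P)).trace := by rw [hRS, mul_one, trace_mul_comm]
      _ = (ρ * P).trace := by rw [← mul_assoc, ← mul_assoc, hSR, one_mul]
  have hZZ : (Z * Z).trace.re ≤ (τ * P).trace.re := by
    calc (Z * Z).trace.re ≤ (Z * (S * S)).trace.re := re_trace_mul_self_le_of_le hZ₀ hZ₁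
      _ = (τ * P).trace.re := by
        rw [← hS4, trace_mul_comm _ P]
        simp only [Z, mul_assoc]
        rw [trace_mul_comm S]
        simp only [mul_assoc]
  calc (ρ * P).trace.re ^ 2 = (T * Z).trace.re ^ 2 := by rw [hTZ]
    _ ≤ (T * T).trace.re * (Z * Z).trace.re :=
        sq_re_trace_mul_le hT (nonneg_iff_posSemidef.mp hZ₀).isHermitian
    _ ≤ expD2 ρ τ * (τ * P).trace.re := by
        rw [← hE]
        exact mul_le_mul_of_nonneg_left hZZ (expD2_nonneg hρ τ)

lemma one_sub_le_expD2_mul {ρ σ : Matrix n n ℂ} (hρ : IsDensity ρ) (hσ : σ.IsHermitian)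
    {η l₁ l₂ c : ℝ} (hη : η < 1) (hl₂ : 0 ≤ l₂) (hc : 0 < c)
    (hτ : ((l₁ : ℂ) • ρ + (l₂ : ℂ) • σ).PosDef)
    (hρc : (ρ * projLE ρ ((c : ℂ) • σ)).trace.re ≤ η) :
    1 - η ≤ expD2 ρ ((l₁ : ℂ) • ρ + (l₂ : ℂ) • σ) * (l₁ + l₂ / c) := by
  have hH := isHermitian_real_smul_sub hρ.1.isHermitian hσ c
  set P := 1 - projLE ρ ((c : ℂ) • σ)
  have hτP : (((l₁ : ℂ) • ρ + (l₂ : ℂ) • σ) * P).trace.re =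
      l₁ * (ρ * P).trace.re + l₂ * (σ * P).trace.re := by
    simp only [add_mul, smul_mul_assoc, trace_add, trace_smul, smul_eq_mul, Complex.add_re,
      Complex.re_ofReal_mul]
  have hσP : c * (σ * P).trace.re ≤ (ρ * P).trace.re := by
    have := re_trace_mul_one_sub_projLE_le hH
    rwa [smul_mul_assoc, trace_smul, smul_eq_mul, Complex.re_ofReal_mul] at this
  have ht : 1 - η ≤ (ρ * P).trace.re := by
    simp only [P, mul_sub, mul_one, trace_sub, hρ.2, Complex.sub_re, Complex.one_re]
    linarith
  have hsq := sq_re_trace_mul_le_expD2_mul hρ.1.isHermitian hτ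
    (sub_nonneg.mpr (projLE_le_one hH)) (sub_le_self _ (projLE_nonneg hH))
  rw [hτP] at hsq
  set t := (ρ * P).trace.re
  have ht₀ : 0 < t := by linarith
  have hσP' : l₂ * (σ * P).trace.re ≤ l₂ / c * t := by
    rw [div_mul_eq_mul_div, le_div_iff₀ hc]
    nlinarith
  have : t * t ≤ (expD2 ρ ((l₁ : ℂ) • ρ + (l₂ : ℂ) • σ) * (l₁ + l₂ / c)) * t := by
    nlinarith [expD2_nonneg hρ.1.isHermitian ((l₁ : ℂ) • ρ + (l₂ : ℂ) • σ)]
  exact ht.trans (le_of_mul_le_mul_right this ht₀)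

/-- **Lower bound on the exponential collision divergence via the information-spectrum
divergence** (Lemma 9 in the paper). -/
theorem expD2_ge_via_Ds
    (d : ℕ) (ρ σ : Matrix (Fin d) (Fin d) ℂ) (hρ : IsDensity ρ) (hσ : σ.PosSemidef)
    (η l₁ l₂ : ℝ) (hη0 : 0 < η) (hη1 : η < 1) (hl₁ : 0 < l₁) (hl₂ : 0 < l₂)
    (hpd : ((l₁ : ℂ) • ρ + (l₂ : ℂ) • σ).PosDef) :
    (1 - η) / (l₁ + l₂ * Real.exp (-(Ds η ρ σ))) ≤
      expD2 ρ ((l₁ : ℂ) • ρ + (l₂ : ℂ) • σ) := by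
  suffices 1 - η - expD2 ρ ((l₁ : ℂ) • ρ + (l₂ : ℂ) • σ) * l₁ ≤
      expD2 ρ ((l₁ : ℂ) • ρ + (l₂ : ℂ) • σ) * l₂ * Real.exp (-Ds η ρ σ) by
    rw [div_le_iff₀ (by positivity)]
    linarith
  obtain ⟨c₀, hc₀, hc₀η⟩ := exists_re_trace_mul_projLE_le hρ.1.isHermitian hσ hη0
  refine le_mul_exp_neg_csSup ?_ (mul_nonneg (expD2_nonneg hρ.1.isHermitian _) hl₂.le) ?_
  · exact ⟨Real.log c₀, c₀, hc₀, hc₀η, rfl⟩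
  · rintro _ ⟨c, hc, hcη, rfl⟩
    have := one_sub_le_expD2_mul hρ hσ.isHermitian hη1 hl₂.le hc hpd hcη
    rw [Real.exp_neg, Real.exp_log hc, ← div_eq_mul_inv]
    rw [mul_add, ← mul_div_assoc] at this
    linarith

end QD
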